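/- Let 𝒯 be a finite set of templates and let 𝒩 be a c-bounded 𝒯-GNN with l layers and Boolean classification function. Then there exists a GML(𝒯) formula φ of modal depth l and counting bound c that captures 𝒩: for every finite labelled graph G (over the fixed finite proposition set) and every node v of G, 𝒩(G,v) = 1 if and only if (G,v) ⊨ φ. -/

import Mathlib

set_option maxHeartbeats 1000000

attribute [local instance 10] Classical.propDecidable

/-- A template `T = (V, E⁺, E⁻, r)`: vertex set `Fin (n+1)` (cardinality `n+1`),
root `0`, edges `pos`, non-edges `neg`, with `pos ∩ neg = ∅`. -/
structure Template where
  n : ℕ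
  pos : Finset (Fin (n + 1) × Fin (n + 1))
  neg : Finset (Fin (n + 1) × Fin (n + 1))
  disj : ∀ p, ¬(p ∈ pos ∧ p ∈ neg)

/-- A labelled directed graph with labels in `Λ`: a finite vertex set (a finite
subset of `ℕ`), an edge relation `E ⊆ V × V`, and a labelling of the nodes. -/
structure LGraph (Λ : Type) where
  verts : Finset ℕ
  edge : ℕ → ℕ → Prop
  lab : ℕ → Λ
  edge_mem : ∀ u w, edge u w → u ∈ verts ∧ w ∈ verts

/-- `f` is a template embedding of `T` into the pointed graph `(G, w)`:
an injective map sending the root to `w`, `E⁺`-pairs to edges and `E⁻`-pairs to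
non-edges. -/
def IsEmb {Λ : Type} (T : Template) (G : LGraph Λ) (w : ℕ) (f : Fin (T.n + 1) → ℕ) : Prop :=
  Function.Injective f ∧ f 0 = w ∧ (∀ i, f i ∈ G.verts) ∧
    (∀ p ∈ T.pos, G.edge (f p.1) (f p.2)) ∧ (∀ p ∈ T.neg, ¬ G.edge (f p.1) (f p.2))

/-- The (finite) set `emb(T,(G,w))` of template embeddings of `T` into `(G, w)`. -/
noncomputable def embFinset {Λ : Type} (T : Template) (G : LGraph Λ) (w : ℕ) :
    Finset (Fin (T.n + 1) → ℕ) :=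
  (Fintype.piFinset fun _ : Fin (T.n + 1) => G.verts).filter (IsEmb T G w)

/-- Forth condition: any `k` pairwise distinct template embeddings of `T` at `(G,v)`
can be matched by `k` pairwise distinct embeddings at `(G',v')`, pointwise related
by `Z`. -/
def Forth {Λ : Type} (Z : ℕ → ℕ → Prop) (T : Template) (G G' : LGraph Λ)
    (v v' : ℕ) (k : ℕ) : Prop :=
  ∀ F : Fin k → (Fin (T.n + 1) → ℕ), Function.Injective F → (∀ i, IsEmb T G v (F i)) →
    ∃ F' : Fin k → (Fin (T.n + 1) → ℕ), Function.Injective F' ∧ (∀ i, IsEmb T G' v' (F' i)) ∧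
      ∀ i u, Z (F i u) (F' i u)

/-- `Z` is a graded `l`-`𝒯`-bisimulation between `G` and `G'`, where the allowed
multiplicities `k` in the back-and-forth conditions are those satisfying `P`. -/
def IsBisimP {Λ : Type} (𝒯 : Finset Template) (P : ℕ → Prop) (G G' : LGraph Λ) :
    ℕ → (ℕ → ℕ → Prop) → Prop
  | 0, Z => ∀ v v', Z v v' → G.lab v = G'.lab v'
  | l + 1, Z => ∃ Z', IsBisimP 𝒯 P G G' l Z' ∧
      ∀ v v', Z v v' → Z' v v' ∧ ∀ T ∈ 𝒯, ∀ k, P k →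
        Forth Z' T G G' v v' k ∧ Forth (fun a b => Z' b a) T G' G v' v k

/-- `(G,v)` and `(G',v')` are graded `l`-`𝒯`-bisimilar. -/
def GBisimilar {Λ : Type} (𝒯 : Finset Template) (l : ℕ) (G : LGraph Λ) (v : ℕ)
    (G' : LGraph Λ) (v' : ℕ) : Prop :=
  ∃ Z, IsBisimP 𝒯 (fun k => 1 ≤ k) G G' l Z ∧ Z v v'

/-- `(G,v)` and `(G',v')` are `l`-`c`-`𝒯`-bisimilar (multiplicities restricted to `k ≤ c`). -/
def BBisimilar {Λ : Type} (𝒯 : Finset Template) (l c : ℕ) (G : LGraph Λ) (v : ℕ)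
    (G' : LGraph Λ) (v' : ℕ) : Prop :=
  ∃ Z, IsBisimP 𝒯 (fun k => 1 ≤ k ∧ k ≤ c) G G' l Z ∧ Z v v'

/-- `A↾c`: cap all multiplicities of a multiset at `c`. -/
noncomputable def mcap {α : Type} (c : ℕ) (m : Multiset α) : Multiset α :=
  m.toFinset.val.bind fun a => Multiset.replicate (min c (m.count a)) a

/-- The `𝒯`-WL colouring of `G` after `l` rounds, using `hash0` for the initial
colouring and `hash` for the refinement rounds; at each round the new colour of `v`
hashes its previous colour together with, for each template `T ∈ 𝒯`, the multiset of
`T`-labelled colourings induced by the template embeddings at `v`. -/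
noncomputable def colWL {Λ C : Type} (𝒯 : Finset Template) (hash0 : Λ → C)
    (hash : C → ((T : {x // x ∈ 𝒯}) → Multiset (Fin (T.1.n + 1) → C)) → C)
    (G : LGraph Λ) : ℕ → ℕ → C
  | 0, v => hash0 (G.lab v)
  | l + 1, v =>
      hash (colWL 𝒯 hash0 hash G l v)
        (fun T => (embFinset T.1 G v).val.map
          (fun f => fun u => colWL 𝒯 hash0 hash G l (f u)))

/-- A multiset function is `c`-bounded if its value is unchanged when all
multiplicities larger than `c` are replaced by `c`. -/
def CBoundedFun {α β : Type} (c : ℕ) (g : Multiset α → β) : Prop :=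
  ∀ m, g m = g (mcap c m)

/-- An `nAr`-ary `L`-layer `𝒯`-GNN with feature dimension `d`: templates from `𝒯`,
template-aggregation functions (invariant under root-fixing label-preserving template
automorphisms), outer multiset aggregation functions, combination functions, and a
Boolean classification function. -/
structure TGNN (𝒯 : Finset Template) (d nAr L : ℕ) where
  temp : Fin L → Fin nAr → Template
  temp_mem : ∀ l j, temp l j ∈ 𝒯
  aggT : (l : Fin L) → (j : Fin nAr) → ((Fin ((temp l j).n + 1) → (Fin d → ℝ)) → (Fin d → ℝ))
  aggT_inv : ∀ (l : Fin L) (j : Fin nAr) (σ : Equiv.Perm (Fin ((temp l j).n + 1)))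
      (lab₁ lab₂ : Fin ((temp l j).n + 1) → (Fin d → ℝ)),
      σ 0 = 0 →
      (∀ p : Fin ((temp l j).n + 1) × Fin ((temp l j).n + 1),
        p ∈ (temp l j).pos ↔ (σ p.1, σ p.2) ∈ (temp l j).pos) →
      (∀ p : Fin ((temp l j).n + 1) × Fin ((temp l j).n + 1),
        p ∈ (temp l j).neg ↔ (σ p.1, σ p.2) ∈ (temp l j).neg) →
      (∀ u, u ≠ 0 → lab₁ u = lab₂ (σ u)) →
      aggT l j lab₁ = aggT l j lab₂
  agg : Fin L → Fin nAr → Multiset (Fin d → ℝ) → (Fin d → ℝ)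
  comb : Fin L → (Fin d → ℝ) → (Fin nAr → (Fin d → ℝ)) → (Fin d → ℝ)
  cls : (Fin d → ℝ) → Bool

/-- The feature vector `λ^l(v)` of node `v` after `l` layers of the `𝒯`-GNN `N` on
input graph `G`. -/
noncomputable def TGNN.feat {𝒯 : Finset Template} {d nAr L : ℕ} (N : TGNN 𝒯 d nAr L)
    (G : LGraph (Fin d → ℝ)) : ℕ → ℕ → (Fin d → ℝ)
  | 0, v => G.lab v
  | l + 1, v =>
      if h : l < L then
        N.comb ⟨l, h⟩ (N.feat G l v)
          (fun j => N.agg ⟨l, h⟩ j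
            ((embFinset (N.temp ⟨l, h⟩ j) G v).val.map
              (fun f => N.aggT ⟨l, h⟩ j (fun u => N.feat G l (f u)))))
      else fun _ => 0

/-- A `𝒯`-GNN is `c`-bounded if all its outer aggregation functions are `c`-bounded. -/
def TGNN.IsCBounded {𝒯 : Finset Template} {d nAr L : ℕ} (N : TGNN 𝒯 d nAr L) (c : ℕ) : Prop :=
  ∀ l j, CBoundedFun c (N.agg l j)

def boolToReal (b : Bool) : ℝ := if b then 1 else 0

/-- Identify a `{0,1}^d`-labelled graph with a real-vector labelled graph. -/
def LGraph.toReal {d : ℕ} (G : LGraph (Fin d → Bool)) : LGraph (Fin d → ℝ) :=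
  ⟨G.verts, G.edge, fun v i => boolToReal (G.lab v i), G.edge_mem⟩

/-- Initialize real feature vectors of dimension `d'` from `{0,1}^a`-labels
(the first `a` coordinates hold the truth values of the propositions, the rest are `0`). -/
def initG {a : ℕ} (d' : ℕ) (G : LGraph (Fin a → Bool)) : LGraph (Fin d' → ℝ) :=
  ⟨G.verts, G.edge, fun v i => if h : (i : ℕ) < a then boolToReal (G.lab v ⟨i, h⟩) else 0,
    G.edge_mem⟩

/-- Formulae of graded template modal logic `GML(𝒯)` over propositions `AP`
(`⊤` included; a modality `⟨T⟩^{≥j}(φ₁,…,φ_{n_T})` takes `n_T = |V_T| - 1` arguments). -/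
inductive GML (AP : Type) : Type
  | top : GML AP
  | prop : AP → GML AP
  | neg : GML AP → GML AP
  | and : GML AP → GML AP → GML AP
  | dia : (T : Template) → ℕ → (Fin T.n → GML AP) → GML AP

/-- Semantics of `GML(𝒯)` on pointed labelled graphs:
`(G,v) ⊨ ⟨T⟩^{≥j}(φ⃗)` iff at least `j` embeddings `f ∈ emb(T,(G,v))` satisfy
`(G, f(i)) ⊨ φᵢ` for all `1 ≤ i ≤ n_T`. -/
def Sat {AP : Type} (G : LGraph (AP → Bool)) : GML AP → ℕ → Prop
  | .top, _ => True
  | .prop p, v => G.lab v p = true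
  | .neg φ, v => ¬ Sat G φ v
  | .and φ ψ, v => Sat G φ v ∧ Sat G ψ v
  | .dia T j φs, v =>
      j ≤ ((embFinset T G v).filter
        (fun f => ∀ i : Fin T.n, Sat G (φs i) (f i.succ))).card

/-- Modal depth. -/
def GML.md {AP : Type} : GML AP → ℕ
  | .top => 0
  | .prop _ => 0
  | .neg φ => φ.md
  | .and φ ψ => max φ.md ψ.md
  | .dia _ _ φs => 1 + Finset.univ.sup fun i => (φs i).md

/-- Counting bound: the least `c` such that every modality `⟨T⟩^{≥j}` occurring in the
formula has `j ≤ c`. -/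
def GML.cb {AP : Type} : GML AP → ℕ
  | .top => 0
  | .prop _ => 0
  | .neg φ => φ.cb
  | .and φ ψ => max φ.cb ψ.cb
  | .dia _ j φs => max j (Finset.univ.sup fun i => (φs i).cb)

/-- Syntactic depth: counts both Boolean connectives and modalities along the deepest
branch of the syntax tree. -/
def GML.sd {AP : Type} : GML AP → ℕ
  | .top => 0
  | .prop _ => 0
  | .neg φ => 1 + φ.sd
  | .and φ ψ => 1 + max φ.sd ψ.sd
  | .dia _ _ φs => 1 + Finset.univ.sup fun i => (φs i).sd

/-- Well-formedness of a `GML(𝒯)` formula: all templates come from `𝒯` and all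
grades satisfy `j ≥ 1`. -/
def GML.Wf {AP : Type} (𝒯 : Finset Template) : GML AP → Prop
  | .top => True
  | .prop _ => True
  | .neg φ => φ.Wf 𝒯
  | .and φ ψ => φ.Wf 𝒯 ∧ ψ.Wf 𝒯
  | .dia T j φs => T ∈ 𝒯 ∧ 1 ≤ j ∧ ∀ i, (φs i).Wf 𝒯

/-- Finite conjunction (`⊤` for the empty list). -/
def bigConj {AP : Type} : List (GML AP) → GML AP
  | [] => .top
  | φ :: rest => .and φ (bigConj rest)

/-- `|S^{(G,v)}_{T,φ⃗}|`: the number of embeddings `f ∈ emb(T,(G,v))` with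
`(G, f(i)) ⊨ φᵢ` for all `1 ≤ i ≤ n_T`. -/
noncomputable def Scard {AP : Type} (G : LGraph (AP → Bool)) (T : Template) (v : ℕ)
    (φs : Fin T.n → GML AP) : ℕ :=
  ((embFinset T G v).filter (fun f => ∀ i : Fin T.n, Sat G (φs i) (f i.succ))).card

/-- The `l`-characteristic formula `χ^l_{(G,v)}`. -/
noncomputable def charU {AP : Type} [Fintype AP] (𝒯 : Finset Template) :
    ℕ → LGraph (AP → Bool) → ℕ → GML AP
  | 0 => fun G v =>
      bigConj ((Finset.univ : Finset AP).toList.map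
        (fun p => if G.lab v p then GML.prop p else GML.neg (GML.prop p)))
  | l + 1 => fun G v =>
      GML.and (charU 𝒯 l G v)
        (bigConj (𝒯.toList.map (fun T =>
          GML.and
            (bigConj ((embFinset T G v).toList.map (fun f =>
              GML.dia T (Scard G T v (fun i => charU 𝒯 l G (f i.succ)))
                (fun i => charU 𝒯 l G (f i.succ)))))
            (GML.neg (GML.dia T (Scard G T v (fun _ => GML.top) + 1)
              (fun _ => GML.top))))))

/-- `reps m` is a system of representatives for the `m`-`c`-`𝒯`-bisimilarity classes of
finite pointed labelled graphs: every representative is a genuine pointed graph, every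
pointed graph is `m`-`c`-`𝒯`-bisimilar to some representative, and distinct
representatives are non-bisimilar. -/
def RepSystem {AP : Type} (𝒯 : Finset Template) (c : ℕ)
    (reps : ℕ → Finset (LGraph (AP → Bool) × ℕ)) : Prop :=
  ∀ m : ℕ,
    (∀ q ∈ reps m, q.2 ∈ q.1.verts) ∧
    (∀ (G : LGraph (AP → Bool)) (v : ℕ), v ∈ G.verts →
      ∃ q ∈ reps m, BBisimilar 𝒯 m c q.1 q.2 G v) ∧
    (∀ q ∈ reps m, ∀ q' ∈ reps m, BBisimilar 𝒯 m c q.1 q.2 q'.1 q'.2 → q = q')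

/-- The bounded `l`-`c`-characteristic formula `χ^{l,c}_{(G,v)}`, relative to a chosen
system `reps` of representatives of the bounded bisimilarity classes. -/
noncomputable def charB {AP : Type} [Fintype AP] (𝒯 : Finset Template) (c : ℕ)
    (reps : ℕ → Finset (LGraph (AP → Bool) × ℕ)) :
    ℕ → LGraph (AP → Bool) → ℕ → GML AP
  | 0 => fun G v =>
      bigConj ((Finset.univ : Finset AP).toList.map
        (fun p => if G.lab v p then GML.prop p else GML.neg (GML.prop p)))
  | l + 1 => fun G v =>
      GML.and (charB 𝒯 c reps l G v)
        (bigConj (𝒯.toList.map (fun T =>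
          GML.and
            (bigConj ((embFinset T G v).toList.map (fun f =>
              GML.dia T (min c (Scard G T v (fun i => charB 𝒯 c reps l G (f i.succ))))
                (fun i => charB 𝒯 c reps l G (f i.succ)))))
            (bigConj (((Fintype.piFinset (fun _ : Fin T.n => reps l)).filter
                (fun t => Scard G T v
                  (fun i => charB 𝒯 c reps l (t i).1 (t i).2) + 1 ≤ c)).toList.map
              (fun t => GML.neg (GML.dia T
                  (Scard G T v (fun i => charB 𝒯 c reps l (t i).1 (t i).2) + 1)
                  (fun i => charB 𝒯 c reps l (t i).1 (t i).2))))))))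

/-- Standard graded forth condition on out-neighbours. -/
def StdForth {Λ : Type} (Z : ℕ → ℕ → Prop) (G G' : LGraph Λ) (v v' : ℕ) (k : ℕ) : Prop :=
  ∀ us : Fin k → ℕ, Function.Injective us → (∀ i, G.edge v (us i)) →
    ∃ us' : Fin k → ℕ, Function.Injective us' ∧ (∀ i, G'.edge v' (us' i)) ∧
      ∀ i, Z (us i) (us' i)

/-- `Z` is a standard graded `l`-bisimulation (the relation underlying standard 1-WL
colour refinement). -/
def IsStdBisim {Λ : Type} (G G' : LGraph Λ) : ℕ → (ℕ → ℕ → Prop) → Prop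
  | 0, Z => ∀ v v', Z v v' → G.lab v = G'.lab v'
  | l + 1, Z => ∃ Z', IsStdBisim G G' l Z' ∧
      ∀ v v', Z v v' → Z' v v' ∧ ∀ k, 1 ≤ k →
        StdForth Z' G G' v v' k ∧ StdForth (fun a b => Z' b a) G' G v' v k

/-- `(G,v)` and `(G',v')` are standard graded `l`-bisimilar. -/
def StdBisimilar {Λ : Type} (l : ℕ) (G : LGraph Λ) (v : ℕ) (G' : LGraph Λ) (v' : ℕ) : Prop :=
  ∃ Z, IsStdBisim G G' l Z ∧ Z v v'

/-- The edge template `T₁ = ({r,a}, E⁺ = {(r,a)}, E⁻ = ∅, r)`. -/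
def T1 : Template := ⟨1, {(0, 1)}, ∅, by decide⟩

/-- The triangle template `T△ = ({r,a,b}, E⁺ = {(r,a),(a,b),(b,r)}, E⁻ = ∅, r)`. -/
def Ttri : Template := ⟨2, {(0, 1), (1, 2), (2, 0)}, ∅, by decide⟩

/-- The directed 3-cycle, all nodes with the same constant label. -/
def G3 : LGraph Unit where
  verts := {0, 1, 2}
  edge u w := (u = 0 ∧ w = 1) ∨ (u = 1 ∧ w = 2) ∨ (u = 2 ∧ w = 0)
  lab _ := ()
  edge_mem := by rintro u w (⟨rfl, rfl⟩ | ⟨rfl, rfl⟩ | ⟨rfl, rfl⟩) <;> simp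

/-- The directed 6-cycle, all nodes with the same constant label. -/
def G6 : LGraph Unit where
  verts := Finset.range 6
  edge u w := u < 6 ∧ w = (u + 1) % 6
  lab _ := ()
  edge_mem := by
    rintro u w ⟨hu, rfl⟩
    simp only [Finset.mem_range]
    omega

/-! A `c`-bounded GNN cannot distinguish nodes with the same `c`-bounded `l`-type: the label
together with, for each template and each tuple of `(l-1)`-types of its non-root vertices, the
number of embeddings realising that tuple, capped at `c`. Capping a multiset commutes with
mapping it, so the features after `l` layers factor through these types. There are finitely
many types, each defined by a `GML(𝒯)` formula of modal depth `l` and counting bound `c`; the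
nodes accepted by the GNN are defined by the disjunction over the accepted types. -/

theorem min_sum_min {ι : Type*} (c : ℕ) (s : Finset ι) (f : ι → ℕ) :
    min c (∑ i ∈ s, min c (f i)) = min c (∑ i ∈ s, f i) := by
  induction s using Finset.induction with
  | empty => simp
  | insert _ _ hx ih =>
    rw [Finset.sum_insert hx, Finset.sum_insert hx]
    omega

section Mcap

variable {α β : Type} (c : ℕ)

theorem count_mcap [DecidableEq α] (m : Multiset α) (a : α) :
    (mcap c m).count a = min c (m.count a) := by
  obtain rfl : ‹DecidableEq α› = fun a b => Classical.propDecidable (a = b) :=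
    Subsingleton.elim _ _
  rw [mcap, Multiset.count_bind, ← Finset.sum_eq_multiset_sum]
  simp_rw [Multiset.count_replicate]
  rw [Finset.sum_ite_eq']
  split_ifs with ha
  · rfl
  · rw [Multiset.count_eq_zero.mpr (mt Multiset.mem_toFinset.mpr ha), min_zero]

theorem mcap_eq_mcap_iff [DecidableEq α] {m m' : Multiset α} :
    mcap c m = mcap c m' ↔ ∀ a, min c (m.count a) = min c (m'.count a) := by
  simp only [Multiset.ext, count_mcap]

theorem filter_mcap (p : α → Prop) (m : Multiset α) :
    (mcap c m).filter p = mcap c (m.filter p) := by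
  ext a
  rw [Multiset.count_filter, count_mcap, count_mcap, Multiset.count_filter]
  split_ifs <;> simp

theorem min_card_mcap (m : Multiset α) :
    min c (Multiset.card (mcap c m)) = min c (Multiset.card m) := by
  rw [mcap, Multiset.card_bind, ← Multiset.toFinset_sum_count_eq, ← Finset.sum_eq_multiset_sum]
  simp_rw [Function.comp_apply, Multiset.card_replicate]
  exact min_sum_min c _ _

theorem mcap_map_mcap (F : α → β) (m : Multiset α) :
    mcap c ((mcap c m).map F) = mcap c (m.map F) := by
  ext b
  rw [count_mcap, count_mcap, Multiset.count_map, Multiset.count_map, filter_mcap, min_card_mcap]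

theorem CBoundedFun.map_eq_of_mcap_eq {γ : Type} {A : Multiset β → γ} (hA : CBoundedFun c A)
    (F : α → β) {m m' : Multiset α} (h : mcap c m = mcap c m') :
    A (m.map F) = A (m'.map F) := by
  rw [hA (m.map F), hA (m'.map F), ← mcap_map_mcap c F m, h, mcap_map_mcap]

end Mcap

namespace GML

variable {AP : Type}

noncomputable def iConj {ι : Type} [Fintype ι] (φ : ι → GML AP) : GML AP :=
  bigConj (Finset.univ.toList.map φ)

noncomputable def iDisj {ι : Type} [Fintype ι] (φ : ι → GML AP) : GML AP :=
  neg (iConj fun i => neg (φ i))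

/-- Only grades in `[1, c]` occur, so that the formula is well-formed with counting bound `c`. -/
def cappedCount (c : ℕ) (T : Template) (φs : Fin T.n → GML AP) (k : ℕ) : GML AP :=
  if k = 0 then neg (dia T 1 φs)
  else if k < c then and (dia T k φs) (neg (dia T (k + 1) φs))
  else dia T c φs

def Bounded (𝒯 : Finset Template) (l c : ℕ) (φ : GML AP) : Prop :=
  φ.Wf 𝒯 ∧ φ.md ≤ l ∧ φ.cb ≤ c

variable {𝒯 : Finset Template} {l c : ℕ}

theorem Bounded.mono {l' : ℕ} {φ : GML AP} (h : φ.Bounded 𝒯 l c) (hl : l ≤ l') :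
    φ.Bounded 𝒯 l' c :=
  ⟨h.1, h.2.1.trans hl, h.2.2⟩

theorem bounded_top : (top : GML AP).Bounded 𝒯 l c :=
  ⟨trivial, Nat.zero_le _, Nat.zero_le _⟩

theorem bounded_prop (p : AP) : (prop p).Bounded 𝒯 l c :=
  ⟨trivial, Nat.zero_le _, Nat.zero_le _⟩

theorem Bounded.neg {φ : GML AP} (h : φ.Bounded 𝒯 l c) : φ.neg.Bounded 𝒯 l c := h

theorem Bounded.and {φ ψ : GML AP} (hφ : φ.Bounded 𝒯 l c) (hψ : ψ.Bounded 𝒯 l c) :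
    (φ.and ψ).Bounded 𝒯 l c :=
  ⟨⟨hφ.1, hψ.1⟩, max_le hφ.2.1 hψ.2.1, max_le hφ.2.2 hψ.2.2⟩

theorem Bounded.dia {T : Template} {j : ℕ} {φs : Fin T.n → GML AP} (hT : T ∈ 𝒯)
    (hj : 1 ≤ j) (hjc : j ≤ c) (h : ∀ i, (φs i).Bounded 𝒯 l c) :
    (dia T j φs).Bounded 𝒯 (l + 1) c := by
  have hmd : (Finset.univ.sup fun i => (φs i).md) ≤ l := Finset.sup_le fun i _ => (h i).2.1
  have hcb : (Finset.univ.sup fun i => (φs i).cb) ≤ c := Finset.sup_le fun i _ => (h i).2.2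
  refine ⟨⟨hT, hj, fun i => (h i).1⟩, ?_, max_le hjc hcb⟩
  change 1 + _ ≤ l + 1
  omega

theorem bounded_bigConj {φs : List (GML AP)} (h : ∀ φ ∈ φs, φ.Bounded 𝒯 l c) :
    (bigConj φs).Bounded 𝒯 l c := by
  induction φs with
  | nil => exact bounded_top
  | cons φ φs ih =>
    exact (h φ List.mem_cons_self).and (ih fun ψ hψ => h ψ (List.mem_cons_of_mem _ hψ))

theorem bounded_iConj {ι : Type} [Fintype ι] {φ : ι → GML AP}
    (h : ∀ i, (φ i).Bounded 𝒯 l c) : (iConj φ).Bounded 𝒯 l c :=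
  bounded_bigConj (by simpa using h)

theorem bounded_iDisj {ι : Type} [Fintype ι] {φ : ι → GML AP}
    (h : ∀ i, (φ i).Bounded 𝒯 l c) : (iDisj φ).Bounded 𝒯 l c :=
  (bounded_iConj fun i => (h i).neg).neg

theorem bounded_cappedCount (hc : 1 ≤ c) {T : Template} (hT : T ∈ 𝒯)
    {φs : Fin T.n → GML AP} (h : ∀ i, (φs i).Bounded 𝒯 l c) (k : ℕ) :
    (cappedCount c T φs k).Bounded 𝒯 (l + 1) c := by
  unfold cappedCount
  split_ifs
  · exact (Bounded.dia hT le_rfl hc h).neg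
  · exact (Bounded.dia hT (by omega) (by omega) h).and
      (Bounded.dia hT (by omega) (by omega) h).neg
  · exact Bounded.dia hT hc le_rfl h

end GML

section Sat

variable {AP : Type} (G : LGraph (AP → Bool)) (v : ℕ)

theorem sat_bigConj (φs : List (GML AP)) :
    Sat G (bigConj φs) v ↔ ∀ φ ∈ φs, Sat G φ v := by
  induction φs with
  | nil => simp [bigConj, Sat]
  | cons φ φs ih => simp [bigConj, Sat, ih]

theorem sat_iConj {ι : Type} [Fintype ι] (φ : ι → GML AP) :
    Sat G (GML.iConj φ) v ↔ ∀ i, Sat G (φ i) v := by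
  simp [GML.iConj, sat_bigConj]

theorem sat_iDisj {ι : Type} [Fintype ι] (φ : ι → GML AP) :
    Sat G (GML.iDisj φ) v ↔ ∃ i, Sat G (φ i) v := by
  simp [GML.iDisj, Sat, sat_iConj]

theorem sat_dia (T : Template) (j : ℕ) (φs : Fin T.n → GML AP) :
    Sat G (GML.dia T j φs) v ↔ j ≤ Scard G T v φs :=
  Iff.rfl

theorem sat_cappedCount {c : ℕ} (hc : 1 ≤ c) (T : Template) (φs : Fin T.n → GML AP) {k : ℕ}
    (hk : k ≤ c) : Sat G (GML.cappedCount c T φs k) v ↔ min c (Scard G T v φs) = k := by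
  unfold GML.cappedCount
  split_ifs <;> simp only [Sat.eq_3, Sat.eq_4, sat_dia] <;> omega

end Sat

noncomputable def embColours {Λ β : Type} (T : Template) (G : LGraph Λ) (v : ℕ)
    (col : ℕ → β) : Multiset (Fin T.n → β) :=
  (embFinset T G v).val.map fun f i => col (f i.succ)

theorem scard_eq_count_embColours {AP β : Type} (G : LGraph (AP → Bool)) (T : Template)
    (v : ℕ) (φs : Fin T.n → GML AP) (col : ℕ → β) (τ : Fin T.n → β)
    (h : ∀ i w, Sat G (φs i) w ↔ col w = τ i) :
    Scard G T v φs = (embColours T G v col).count τ := by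
  rw [embColours, Multiset.count_map, Scard, Finset.card_def, Finset.filter_val]
  congr 1
  refine Multiset.filter_congr fun f _ => ?_
  simp only [h, funext_iff, eq_comm]

theorem map_embFinset_eq_map_embColours {Λ β X Y : Type} (T : Template) (G : LGraph Λ) (v : ℕ)
    (g : (Fin (T.n + 1) → X) → Y) (col : ℕ → β) (val : β → X) (F : ℕ → X)
    (hF : ∀ w, F w = val (col w)) :
    (embFinset T G v).val.map (fun f => g fun u => F (f u)) =
      (embColours T G v col).map fun τ => g (Fin.cases (F v) fun i => val (τ i)) := by
  rw [embColours, Multiset.map_map]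
  refine Multiset.map_congr rfl fun f hf => congrArg g (funext fun u => ?_)
  obtain ⟨-, hf0, -⟩ := (Finset.mem_filter.mp hf).2
  cases u using Fin.cases with
  | zero => simp [hf0]
  | succ i => simp [hF]

section BType

variable {AP : Type} (𝒯 : Finset Template) (c : ℕ)

def BType (AP : Type) (𝒯 : Finset Template) (c : ℕ) : ℕ → Type
  | 0 => AP → Bool
  | l + 1 => BType AP 𝒯 c l × ((T : 𝒯) → (Fin T.1.n → BType AP 𝒯 c l) → Fin (c + 1))

noncomputable instance BType.instFintype [Fintype AP] : (l : ℕ) → Fintype (BType AP 𝒯 c l)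
  | 0 => inferInstanceAs (Fintype (AP → Bool))
  | l + 1 =>
    letI := BType.instFintype l
    instFintypeProd _ _

noncomputable def bType (G : LGraph (AP → Bool)) : (l : ℕ) → ℕ → BType AP 𝒯 c l
  | 0, v => G.lab v
  | l + 1, v => (bType G l v, fun T τ =>
      ⟨min c ((embColours T.1 G v (bType G l)).count τ), Nat.lt_succ_of_le (min_le_left _ _)⟩)

noncomputable def bTypeFormula [Fintype AP] : (l : ℕ) → BType AP 𝒯 c l → GML AP
  | 0, s => GML.iConj fun p => if s p then .prop p else .neg (.prop p)
  | l + 1, t => .and (bTypeFormula l t.1)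
      (GML.iConj fun p : (T : 𝒯) × (Fin T.1.n → BType AP 𝒯 c l) =>
        GML.cappedCount c p.1.1 (fun i => bTypeFormula l (p.2 i)) (t.2 p.1 p.2))

variable {𝒯 c}

theorem bType_succ_eq_iff {G : LGraph (AP → Bool)} {l v : ℕ} {t : BType AP 𝒯 c (l + 1)} :
    bType 𝒯 c G (l + 1) v = t ↔ bType 𝒯 c G l v = t.1 ∧
      ∀ T τ, min c ((embColours T.1 G v (bType 𝒯 c G l)).count τ) = t.2 T τ := by
  constructor
  · rintro rfl
    exact ⟨rfl, fun _ _ => rfl⟩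
  · rintro ⟨h₁, h₂⟩
    exact Prod.ext h₁ (funext₂ fun T τ => Fin.ext (h₂ T τ))

theorem sat_bTypeFormula_iff [Fintype AP] (hc : 1 ≤ c) (G : LGraph (AP → Bool)) (l v : ℕ)
    (t : BType AP 𝒯 c l) : Sat G (bTypeFormula 𝒯 c l t) v ↔ bType 𝒯 c G l v = t := by
  induction l generalizing v with
  | zero =>
    rw [bTypeFormula, sat_iConj]
    refine (forall_congr' fun p => ?_).trans funext_iff.symm
    cases t p <;> simp [Sat, bType]
  | succ l ih =>
    rw [bType_succ_eq_iff, bTypeFormula, Sat, ih, sat_iConj, Sigma.forall]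
    refine and_congr_right' (forall₂_congr fun T τ => ?_)
    rw [sat_cappedCount G v hc _ _ (Fin.is_le _),
      scard_eq_count_embColours G T.1 v _ (bType 𝒯 c G l) τ fun i w => ih w (τ i)]

theorem bounded_bTypeFormula [Fintype AP] (hc : 1 ≤ c) :
    ∀ (l : ℕ) (t : BType AP 𝒯 c l), (bTypeFormula 𝒯 c l t).Bounded 𝒯 l c
  | 0, s => GML.bounded_iConj fun p => by
      split
      · exact GML.bounded_prop p
      · exact (GML.bounded_prop p).neg
  | l + 1, t => ((bounded_bTypeFormula hc l t.1).mono l.le_succ).and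
      (GML.bounded_iConj fun p =>
        GML.bounded_cappedCount hc p.1.2 (fun i => bounded_bTypeFormula hc l (p.2 i)) _)

end BType

section GNN

variable {𝒯 : Finset Template} {d nAr L c : ℕ} {N : TGNN 𝒯 d nAr L}

theorem feat_succ_eq_of_bType_eq (hN : N.IsCBounded c) {l : ℕ}
    {val : BType (Fin d) 𝒯 c l → Fin d → ℝ}
    (hval : ∀ G v, N.feat G.toReal l v = val (bType 𝒯 c G l v))
    {G G' : LGraph (Fin d → Bool)} {v v' : ℕ}
    (h : bType 𝒯 c G (l + 1) v = bType 𝒯 c G' (l + 1) v') :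
    N.feat G.toReal (l + 1) v = N.feat G'.toReal (l + 1) v' := by
  obtain ⟨hroot, hcount⟩ := bType_succ_eq_iff.mp h
  have hfeat : N.feat G.toReal l v = N.feat G'.toReal l v' := by rw [hval, hval, hroot]; rfl
  rw [TGNN.feat, TGNN.feat]
  split_ifs with hl
  · refine congrArg₂ _ hfeat (funext fun j => ?_)
    set T : 𝒯 := ⟨N.temp ⟨l, hl⟩ j, N.temp_mem ⟨l, hl⟩ j⟩
    change N.agg ⟨l, hl⟩ j ((embFinset T.1 G v).val.map _) =
      N.agg ⟨l, hl⟩ j ((embFinset T.1 G' v').val.map _)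
    rw [map_embFinset_eq_map_embColours T.1 G v _ (bType 𝒯 c G l) val _ (hval G),
      map_embFinset_eq_map_embColours T.1 G' v' _ (bType 𝒯 c G' l) val _ (hval G'), hfeat]
    exact (hN ⟨l, hl⟩ j).map_eq_of_mcap_eq c _ ((mcap_eq_mcap_iff c).mpr (hcount T))
  · rfl

theorem exists_feat_eq_comp_bType (hN : N.IsCBounded c) :
    ∀ l, ∃ val : BType (Fin d) 𝒯 c l → Fin d → ℝ,
      ∀ G v, N.feat G.toReal l v = val (bType 𝒯 c G l v)
  | 0 => ⟨fun s i => boolToReal (s i), fun _ _ => rfl⟩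
  | l + 1 => by
    obtain ⟨val, hval⟩ := exists_feat_eq_comp_bType hN l
    have hfactor : Function.FactorsThrough (fun q : LGraph (Fin d → Bool) × ℕ =>
        N.feat q.1.toReal (l + 1) q.2) (fun q => bType 𝒯 c q.1 (l + 1) q.2) :=
      fun _ _ h => feat_succ_eq_of_bType_eq hN hval h
    exact ⟨Function.extend _ _ 0, fun G v => (hfactor.extend_apply 0 (G, v)).symm⟩

end GNN

/-- For every `c`-bounded `𝒯`-GNN `𝒩` with `L` layers there is a
`GML(𝒯)` formula `φ` of modal depth (at most) `L` and counting bound (at most) `c` that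
captures `𝒩`: for every finite `{0,1}^d`-labelled graph `G` and node `v` of `G`,
`𝒩(G,v) = 1` iff `(G,v) ⊨ φ`. -/
theorem gnn_to_logic {d nAr L : ℕ} (𝒯 : Finset Template) (N : TGNN 𝒯 d nAr L)
    (c : ℕ) (hc : 1 ≤ c) (hN : N.IsCBounded c) :
    ∃ φ : GML (Fin d), φ.Wf 𝒯 ∧ φ.md ≤ L ∧ φ.cb ≤ c ∧
      ∀ (G : LGraph (Fin d → Bool)) (v : ℕ), v ∈ G.verts →
        (N.cls (N.feat G.toReal L v) = true ↔ Sat G φ v) := by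
  obtain ⟨val, hval⟩ := exists_feat_eq_comp_bType hN L
  let φ : GML (Fin d) :=
    GML.iDisj fun t : {t // N.cls (val t) = true} => bTypeFormula 𝒯 c L t.1
  have hφ : φ.Bounded 𝒯 L c := GML.bounded_iDisj fun t => bounded_bTypeFormula hc L t.1
  refine ⟨φ, hφ.1, hφ.2.1, hφ.2.2, fun G v _ => ?_⟩
  simp [φ, sat_iDisj, sat_bTypeFormula_iff hc, hval]
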